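/- For every N ≥ 0, the coefficient of z^1 in the polynomial P^{∘N}(z) equals 4^{-N}; moreover, for every fixed i ≥ 1, the scaled coefficient 4^N · [z^i] P^{∘N}(z) converges as N → ∞ to φ_i, the i-th Taylor coefficient at 0 of the holomorphic function Φ obtained as the locally uniform limit of 4^N P^{∘N} on a neighborhood of 0. Consequently, in the exponential disordered stochastic compression model the relative densities satisfy ρ_i/ρ_1 = 4^N [z^i]P^{∘N}(z) → φ_i as the number N of compression steps tends to infinity. -/
import Mathlib


open Filter Polynomial

/-- The cubic polynomial `P(z) = (z + 2z² + z³)/4`, as a polynomial over `ℂ`. -/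
noncomputable def Pp : Polynomial ℂ :=
  C (1/4 : ℂ) * (X + 2 * X ^ 2 + X ^ 3)

/-- The `N`-fold iterate `P^{∘N}` of `P`, as a polynomial (`P^{∘0} = id`). -/
noncomputable def PpIter : ℕ → Polynomial ℂ
  | 0 => X
  | (N + 1) => Pp.comp (PpIter N)


lemma PpIter_coeff_zero (N : ℕ) : (PpIter N).coeff 0 = 0 := by
  induction N with
  | zero => simp [PpIter]
  | succ N ih =>
    rw [coeff_zero_eq_eval_zero] at ih ⊢
    simp [PpIter, eval_comp, ih, Pp]

lemma PpIter_coeff_one (N : ℕ) : (PpIter N).coeff 1 = (1/4 : ℂ) ^ N := by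
  induction N with
  | zero => simp [PpIter]
  | succ N ih =>
    obtain ⟨R, hR⟩ := (X_dvd_iff).mpr (PpIter_coeff_zero N)
    have h2 : ((PpIter N) ^ 2).coeff 1 = 0 := by
      have : (PpIter N) ^ 2 = R ^ 2 * X ^ 2 := by rw [hR]; ring
      rw [this, coeff_mul_X_pow']
      norm_num
    have h3 : ((PpIter N) ^ 3).coeff 1 = 0 := by
      have : (PpIter N) ^ 3 = R ^ 3 * X ^ 3 := by rw [hR]; ring
      rw [this, coeff_mul_X_pow']
      norm_num
    have hcomp : Pp.comp (PpIter N)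
        = C (1/4 : ℂ) * (PpIter N + 2 * (PpIter N) ^ 2 + (PpIter N) ^ 3) := by
      simp [Pp, add_comp, mul_comp, pow_comp]
    show (Pp.comp (PpIter N)).coeff 1 = _
    rw [hcomp, coeff_C_mul, coeff_add, coeff_add, ih]
    have h2' : (2 * (PpIter N) ^ 2).coeff 1 = 0 := by
      have : 2 * (PpIter N) ^ 2 = (2 * R ^ 2) * X ^ 2 := by rw [hR]; ring
      rw [this, coeff_mul_X_pow']
      norm_num
    rw [h2', h3, pow_succ]
    ring

/-- the coefficient of `z¹` in `P^{∘N}` is `4^{-N}`, and if `Φ` is the locally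
uniform limit of `4^N P^{∘N}` on a neighborhood of `0` (the Koenigs linearizer), with Taylor
coefficients `φ_i = p.coeff i` at `0`, then for every fixed `i ≥ 1` the scaled coefficients
`4^N [z^i] P^{∘N}` (which equal the relative densities `ρ_i/ρ_1` after `N` steps of disordered
compression) converge to `φ_i` as `N → ∞`. -/
theorem stmt4 (U : Set ℂ) (hU : IsOpen U) (h0U : (0 : ℂ) ∈ U) (Φ : ℂ → ℂ)
    (hlim : TendstoLocallyUniformlyOn
      (fun (N : ℕ) (z : ℂ) => (4 : ℂ) ^ N * (PpIter N).eval z) Φ atTop U)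
    (p : FormalMultilinearSeries ℂ ℂ ℂ) (hp : HasFPowerSeriesAt Φ p 0) :
    (∀ N : ℕ, (PpIter N).coeff 1 = (1/4 : ℂ) ^ N) ∧
    ∀ i : ℕ, 1 ≤ i →
      Tendsto (fun N : ℕ => (4 : ℂ) ^ N * (PpIter N).coeff i) atTop (nhds (p.coeff i)) := by
  refine ⟨PpIter_coeff_one, fun i _ => ?_⟩
  -- locally uniform convergence of all iterated derivatives
  have key : ∀ j : ℕ, TendstoLocallyUniformlyOn
      (fun (N : ℕ) (z : ℂ) => (4 : ℂ) ^ N * (derivative^[j] (PpIter N)).eval z)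
      (iteratedDeriv j Φ) atTop U := by
    intro j
    induction j with
    | zero => simpa [iteratedDeriv_zero] using hlim
    | succ j ih =>
      have hdiff : ∀ᶠ N in atTop, DifferentiableOn ℂ
          (fun z => (4 : ℂ) ^ N * (derivative^[j] (PpIter N)).eval z) U :=
        Eventually.of_forall fun N =>
          (((derivative^[j] (PpIter N)).differentiable.const_mul _)).differentiableOn
      have h := ih.deriv hdiff hU
      rw [← iteratedDeriv_succ] at h
      refine h.congr fun N z _ => ?_
      show deriv (fun z => (4 : ℂ) ^ N * (derivative^[j] (PpIter N)).eval z) z = _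
      rw [deriv_const_mul _ ((derivative^[j] (PpIter N)).differentiable.differentiableAt),
        Polynomial.deriv, Function.iterate_succ_apply']
  have hpt := (key i).tendsto_at h0U
  -- rewrite the N-th term
  have hterm : ∀ N : ℕ, (derivative^[i] (PpIter N)).eval 0
      = ((Nat.factorial i : ℕ) : ℂ) * (PpIter N).coeff i := by
    intro N
    rw [← coeff_zero_eq_eval_zero, coeff_iterate_derivative]
    simp [Nat.descFactorial_self, nsmul_eq_mul]
  -- the limit value
  obtain ⟨r, hball⟩ := hp
  have hΦ : iteratedDeriv i Φ 0 = ((Nat.factorial i : ℕ) : ℂ) * p.coeff i := by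
    have := hball.factorial_smul (1 : ℂ) i
    rw [iteratedDeriv, ← this]
    rw [nsmul_eq_mul]
    rfl
  rw [hΦ] at hpt
  have hpt' : Tendsto (fun N : ℕ => ((Nat.factorial i : ℕ) : ℂ) * ((4 : ℂ) ^ N * (PpIter N).coeff i)) atTop
      (nhds (((Nat.factorial i : ℕ) : ℂ) * p.coeff i)) := by
    refine hpt.congr fun N => ?_
    rw [hterm N]; ring
  have hfact : ((Nat.factorial i : ℕ) : ℂ) ≠ 0 := Nat.cast_ne_zero.mpr i.factorial_ne_zero
  have := hpt'.const_mul (((Nat.factorial i : ℕ) : ℂ)⁻¹)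
  simpa [← mul_assoc, inv_mul_cancel₀ hfact] using this
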